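/- Let (A, d) be a differential algebra of weight λ, and regard A as the regular differential bimodule over itself (so that ∂^n_DO : C^n_DO(A) → C^{n+1}_DO(A) is defined using d). Then ∂_DO is a graded derivation of the bracket: for f ∈ C^n_DO(A) and g ∈ C^k_DO(A), ∂^{n+k}_DO([f, g]) = [∂^n_DO(f), g] + (−1)^n [f, ∂^k_DO(g)]. Hence (C^•_DO(A), ∂_DO, [·,·]) is a differential graded Lie algebra. -/
import Mathlib


/-- The coboundary operator `∂ⁿ_DO` of the differential operator `d` of weight `λ`, with
coefficients in the regular differential bimodule `A`:
`∂ⁿ(g)(a₁ ⊗ ⋯ ⊗ a_{n+1}) = (−1)^{n+1}(a₁ + λ d a₁)·g(a₂ ⊗ ⋯)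
+ Σᵢ (−1)^{n+1−i} g(⋯ ⊗ aᵢa_{i+1} ⊗ ⋯) + g(a₁ ⊗ ⋯ ⊗ aₙ)·(a_{n+1} + λ d a_{n+1})`. -/
def hochDOCobReg (k : Type*) [Field k] (lam : k) (A : Type*) [NonUnitalRing A] [Module k A]
    (d : A →ₗ[k] A) {n : ℕ} (F : (Fin n → A) → A) : (Fin (n + 1) → A) → A :=
  fun a =>
    ((-1 : ℤ) ^ (n + 1)) • ((a 0 + lam • d (a 0)) * F (Fin.tail a))
      + (∑ i : Fin n, ((-1 : ℤ) ^ (n - (i : ℕ))) •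
          F (fun j => if (j : ℕ) < (i : ℕ) then a j.castSucc
             else if (j : ℕ) = (i : ℕ) then a j.castSucc * a j.succ
             else a j.succ))
      + F (Fin.init a) * (a (Fin.last n) + lam • d (a (Fin.last n)))

/-- The bracket on `C^•_DO(A)` (see STATEMENT 6). -/
def doBracket (k : Type*) [Field k] (lam : k) (A : Type*) [NonUnitalRing A] [Module k A]
    {n m : ℕ} (f : (Fin n → A) → A) (g : (Fin m → A) → A) :
    (Fin (n + m) → A) → A :=
  fun a =>
    ((-1 : ℤ) ^ (n * m)) •
        (lam • (f (fun i => a ⟨i.val, by have := i.isLt; omega⟩) *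
                g (fun j => a ⟨n + j.val, by have := j.isLt; omega⟩)))
      - lam • (g (fun j => a ⟨j.val, by have := j.isLt; omega⟩) *
               f (fun i => a ⟨m + i.val, by have := i.isLt; omega⟩))

section Aux

variable {k : Type*} [Field k] {A : Type*} [NonUnitalRing A] [Module k A]
  [SMulCommClass k A A] [IsScalarTower k A A]

/-- merge at position `i` -/
def mrgN (i : ℕ) (b : ℕ → A) : ℕ → A :=
  fun j => if j < i then b j else if j = i then b j * b (j+1) else b (j+1)

/-- ℕ-level coboundary -/
def DD (lam : k) (d : A →ₗ[k] A) (n : ℕ) (F : (ℕ → A) → A) (b : ℕ → A) : A :=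
  ((-1 : ℤ) ^ (n+1)) • ((b 0 + lam • d (b 0)) * F (fun i => b (i+1)))
    + (∑ i ∈ Finset.range n, ((-1 : ℤ) ^ (n - i)) • F (mrgN i b))
    + F b * (b n + lam • d (b n))

/-- ℕ-level cup product -/
def cupN (n : ℕ) (F G : (ℕ → A) → A) (b : ℕ → A) : A :=
  F b * G (fun j => b (n + j))

def Reads (n : ℕ) (F : (ℕ → A) → A) : Prop :=
  ∀ b b' : ℕ → A, (∀ i < n, b i = b' i) → F b = F b'

lemma reads_lift (n : ℕ) (F : (Fin n → A) → A) :
    Reads n (fun b => F (fun i : Fin n => b i.val)) := by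
  intro b b' h
  exact congrArg F (funext fun i => h i i.isLt)

lemma DD_ext (lam : k) (d : A →ₗ[k] A) (n : ℕ) (F : (ℕ → A) → A) (hF : Reads n F)
    (b b' : ℕ → A) (h : ∀ i < n + 1, b i = b' i) :
    DD lam d n F b = DD lam d n F b' := by
  have h0 : b 0 = b' 0 := h 0 (by omega)
  have hn' : b n = b' n := h n (by omega)
  have hsh : F (fun i => b (i+1)) = F (fun i => b' (i+1)) :=
    hF _ _ (fun i hi => h (i+1) (by omega))
  have hb : F b = F b' := hF _ _ (fun i hi => h i (by omega))
  have hsum : ∀ i ∈ Finset.range n,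
      ((-1:ℤ)^(n-i)) • F (mrgN i b) = ((-1:ℤ)^(n-i)) • F (mrgN i b') := by
    intro i hi
    simp only [Finset.mem_range] at hi
    congr 1
    apply hF
    intro j hj
    unfold mrgN
    split_ifs
    · exact h j (by omega)
    · rw [h j (by omega), h (j+1) (by omega)]
    · exact h (j+1) (by omega)
  unfold DD
  rw [h0, hn', hsh, hb, Finset.sum_congr rfl hsum]

/-- key derivation lemma -/
lemma DD_cup (lam : k) (d : A →ₗ[k] A) (n m N : ℕ) (hN : N = n + m)
    (F G : (ℕ → A) → A) (hF : Reads n F) (b : ℕ → A) :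
    DD lam d N (cupN n F G) b
      = ((-1 : ℤ) ^ m) • cupN (n+1) (DD lam d n F) G b
        + cupN n F (DD lam d m G) b := by
  subst hN
  unfold DD cupN
  rw [Finset.sum_range_add]
  have hs1 : ∀ i ∈ Finset.range n,
      ((-1:ℤ)^(n+m-i)) • (F (mrgN i b) * G (fun j => mrgN i b (n+j)))
        = ((-1:ℤ)^m) • (((-1:ℤ)^(n-i)) • (F (mrgN i b) * G (fun j => b (n+1+j)))) := by
    intro i hi
    simp only [Finset.mem_range] at hi
    have h1 : (fun j => mrgN i b (n+j)) = (fun j => b (n+1+j)) := by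
      funext j
      unfold mrgN
      rw [if_neg (by omega), if_neg (by omega)]
      congr 1
      omega
    rw [h1, smul_smul, ← pow_add, show m + (n-i) = n+m-i from by omega]
  have hs2 : ∀ i ∈ Finset.range m,
      ((-1:ℤ)^(n+m-(n+i))) • (F (mrgN (n+i) b) * G (fun j => mrgN (n+i) b (n+j)))
        = ((-1:ℤ)^(m-i)) • (F b * G (mrgN i (fun j => b (n+j)))) := by
    intro i hi
    simp only [Finset.mem_range] at hi
    have h1 : F (mrgN (n+i) b) = F b := by
      apply hF
      intro j hj
      unfold mrgN
      rw [if_pos (by omega)]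
    have h2 : (fun j => mrgN (n+i) b (n+j)) = mrgN i (fun j => b (n+j)) := by
      funext j
      unfold mrgN
      rcases lt_trichotomy j i with hlt | heq | hgt
      · rw [if_pos (by omega), if_pos hlt]
      · subst heq
        rw [if_neg (by omega), if_pos rfl, if_neg (by omega), if_pos rfl]
        rfl
      · rw [if_neg (by omega), if_neg (by omega), if_neg (by omega), if_neg (by omega)]
        rfl
    rw [h1, h2, show n+m-(n+i) = m-i from by omega]
  rw [Finset.sum_congr rfl hs1, Finset.sum_congr rfl hs2, ← Finset.smul_sum]
  beta_reduce
  rw [show (fun j => b (n + j + 1)) = (fun j => b (n + 1 + j)) from funext fun j => by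
        congr 1; omega,
      show (fun i => b (n + (i + 1))) = (fun j => b (n + 1 + j)) from funext fun i => by
        congr 1; omega]
  simp only [Nat.add_zero]
  simp only [add_mul, mul_add, Finset.sum_mul, Finset.mul_sum, smul_mul_assoc,
    mul_smul_comm, smul_add, Finset.smul_sum, smul_smul, mul_assoc]
  module

/-- linearity of DD through the bracket-shaped combination -/
lemma DD_comb (lam : k) (d : A →ₗ[k] A) (n : ℕ) (F G : (ℕ → A) → A) (z : ℤ) (b : ℕ → A) :
    DD lam d n (fun c => z • (lam • F c) - lam • G c) b
      = z • (lam • DD lam d n F b) - lam • DD lam d n G b := by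
  unfold DD
  have e1 : ∀ i ∈ Finset.range n,
      ((-1:ℤ)^(n-i)) • (z • (lam • F (mrgN i b)) - lam • G (mrgN i b))
        = z • (lam • (((-1:ℤ)^(n-i)) • F (mrgN i b)))
          - lam • (((-1:ℤ)^(n-i)) • G (mrgN i b)) := fun i _ => by module
  rw [Finset.sum_congr rfl e1, Finset.sum_sub_distrib, ← Finset.smul_sum, ← Finset.smul_sum,
    ← Finset.smul_sum]
  simp only [mul_sub, sub_mul, mul_smul_comm, smul_mul_assoc]
  module

lemma hoch_eq (lam : k) (d : A →ₗ[k] A) (n : ℕ) (F : (Fin n → A) → A) (a : Fin (n+1) → A) :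
    hochDOCobReg k lam A d F a
      = DD lam d n (fun b => F (fun i : Fin n => b i.val))
          (fun i => if h : i < n + 1 then a ⟨i, h⟩ else 0) := by
  unfold hochDOCobReg DD
  beta_reduce
  have h0 : (if h : (0:ℕ) < n + 1 then a ⟨0, h⟩ else 0) = a 0 := by
    rw [dif_pos (Nat.succ_pos n)]
    exact congrArg a (Fin.ext (by simp))
  have ht : (fun i : Fin n => if h : (i:ℕ) + 1 < n + 1 then a ⟨(i:ℕ) + 1, h⟩ else 0)
      = Fin.tail a := by
    funext i
    rw [dif_pos (by omega)]
    rfl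
  have hi : (fun i : Fin n => if h : (i:ℕ) < n + 1 then a ⟨(i:ℕ), h⟩ else 0) = Fin.init a := by
    funext i
    rw [dif_pos (by omega)]
    rfl
  have hl : (if h : n < n + 1 then a ⟨n, h⟩ else 0) = a (Fin.last n) := by
    rw [dif_pos (by omega)]
    rfl
  rw [h0, ht, hi, hl, ← Fin.sum_univ_eq_sum_range]
  congr 1
  congr 1
  apply Finset.sum_congr rfl
  intro i _
  congr 1
  apply congrArg F
  funext j
  unfold mrgN
  beta_reduce
  split_ifs <;> first | rfl | omega

end Aux

/-- for a differential algebra `(A, d)` of weight `λ`, `∂_DO` is a graded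
derivation of the bracket: `∂([f,g]) = [∂f, g] + (−1)ⁿ [f, ∂g]` for `f ∈ Cⁿ_DO(A)`,
`g ∈ Cᵐ_DO(A)`; hence `(C^•_DO(A), ∂_DO, [·,·])` is a dg Lie algebra. -/
theorem stmt8 (k : Type*) [Field k] [CharZero k] (lam : k)
    (A : Type*) [NonUnitalRing A] [Module k A]
    [SMulCommClass k A A] [IsScalarTower k A A]
    (d : A →ₗ[k] A)
    (hd : ∀ u v : A, d (u * v) = d u * v + u * d v + lam • (d u * d v))
    (n m : ℕ) (hn : 1 ≤ n) (hm : 1 ≤ m)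
    (f : MultilinearMap k (fun _ : Fin n => A) A)
    (g : MultilinearMap k (fun _ : Fin m => A) A) :
    ∀ a : Fin (n + m + 1) → A,
      hochDOCobReg k lam A d (doBracket k lam A ⇑f ⇑g) a
        = doBracket k lam A (hochDOCobReg k lam A d ⇑f) ⇑g
            (fun i : Fin (n + 1 + m) => a (Fin.cast (show n + 1 + m = n + m + 1 by omega) i))
          + ((-1 : ℤ) ^ n) • doBracket k lam A ⇑f (hochDOCobReg k lam A d ⇑g)
            (fun i : Fin (n + (m + 1)) => a (Fin.cast (show n + (m + 1) = n + m + 1 by omega) i)) := by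
  intro a
  rw [hoch_eq lam d (n+m) (doBracket k lam A ⇑f ⇑g) a]
  set fh : (ℕ → A) → A := fun b => f (fun i : Fin n => b i.val) with hfh
  set gh : (ℕ → A) → A := fun b => g (fun j : Fin m => b j.val) with hgh
  set E : ℕ → A := fun i => if h : i < n + m + 1 then a ⟨i, h⟩ else 0 with hE
  have hrf : Reads n fh := reads_lift n ⇑f
  have hrg : Reads m gh := reads_lift m ⇑g
  -- abbreviations for the four cup products
  set P := cupN (n+1) (DD lam d n fh) gh E with hP
  set Q := cupN n fh (DD lam d m gh) E with hQ
  set R := cupN (m+1) (DD lam d m gh) fh E with hR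
  set S := cupN m gh (DD lam d n fh) E with hS
  -- identify the lifted bracket
  rw [show (fun b => doBracket k lam A ⇑f ⇑g (fun i : Fin (n+m) => b i.val))
      = (fun c => ((-1:ℤ)^(n*m)) • (lam • cupN n fh gh c) - lam • cupN m gh fh c) from rfl]
  rw [DD_comb lam d (n+m) (cupN n fh gh) (cupN m gh fh) ((-1:ℤ)^(n*m)) E]
  rw [DD_cup lam d n m (n+m) rfl fh gh hrf E]
  rw [DD_cup lam d m n (n+m) (Nat.add_comm n m) gh fh hrg E]
  -- identify the two RHS brackets
  have eDf1 : hochDOCobReg k lam A d ⇑f (fun i : Fin (n+1) => a ⟨i.val, by omega⟩)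
      = DD lam d n fh E := by
    rw [hoch_eq lam d n ⇑f]
    exact DD_ext lam d n fh hrf _ _ (fun i hi => by
      rw [hE]
      beta_reduce
      rw [dif_pos (by omega : i < n + 1), dif_pos (by omega : i < n + m + 1)])
  have eDf4 : hochDOCobReg k lam A d ⇑f (fun i : Fin (n+1) => a ⟨m + i.val, by omega⟩)
      = DD lam d n fh (fun j => E (m + j)) := by
    rw [hoch_eq lam d n ⇑f]
    exact DD_ext lam d n fh hrf _ _ (fun i hi => by
      rw [hE]
      beta_reduce
      rw [dif_pos (by omega : i < n + 1), dif_pos (by omega : m + i < n + m + 1)])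
  have eDg2 : hochDOCobReg k lam A d ⇑g (fun j : Fin (m+1) => a ⟨n + j.val, by omega⟩)
      = DD lam d m gh (fun j => E (n + j)) := by
    rw [hoch_eq lam d m ⇑g]
    exact DD_ext lam d m gh hrg _ _ (fun i hi => by
      rw [hE]
      beta_reduce
      rw [dif_pos (by omega : i < m + 1), dif_pos (by omega : n + i < n + m + 1)])
  have eDg3 : hochDOCobReg k lam A d ⇑g (fun j : Fin (m+1) => a ⟨j.val, by omega⟩)
      = DD lam d m gh E := by
    rw [hoch_eq lam d m ⇑g]
    exact DD_ext lam d m gh hrg _ _ (fun i hi => by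
      rw [hE]
      beta_reduce
      rw [dif_pos (by omega : i < m + 1), dif_pos (by omega : i < n + m + 1)])
  have egE : gh (fun j => E ((n+1) + j)) = g (fun j : Fin m => a ⟨n + 1 + j.val, by omega⟩) := by
    rw [hgh, hE]
    beta_reduce
    exact congrArg g (funext fun j => by rw [dif_pos (by omega : n + 1 + (j:ℕ) < n + m + 1)])
  have egE' : gh E = g (fun j : Fin m => a ⟨j.val, by omega⟩) := by
    rw [hgh, hE]
    beta_reduce
    exact congrArg g (funext fun j => by rw [dif_pos (by omega : (j:ℕ) < n + m + 1)])
  have efE : fh E = f (fun i : Fin n => a ⟨i.val, by omega⟩) := by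
    rw [hfh, hE]
    beta_reduce
    exact congrArg f (funext fun i => by rw [dif_pos (by omega : (i:ℕ) < n + m + 1)])
  have efE' : fh (fun j => E ((m+1) + j)) = f (fun i : Fin n => a ⟨m + 1 + i.val, by omega⟩) := by
    rw [hfh, hE]
    beta_reduce
    exact congrArg f (funext fun i => by rw [dif_pos (by omega : m + 1 + (i:ℕ) < n + m + 1)])
  have hRHS1 : ∀ hc : n + 1 + m = n + m + 1,
      doBracket k lam A (hochDOCobReg k lam A d ⇑f) ⇑g (fun i : Fin (n+1+m) => a (Fin.cast hc i))
        = ((-1:ℤ)^((n+1)*m)) • (lam • P) - lam • S := by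
    intro hc
    calc doBracket k lam A (hochDOCobReg k lam A d ⇑f) ⇑g (fun i : Fin (n+1+m) => a (Fin.cast hc i))
        = ((-1:ℤ)^((n+1)*m)) • (lam •
            (hochDOCobReg k lam A d ⇑f (fun i : Fin (n+1) => a ⟨i.val, by omega⟩) *
             g (fun j : Fin m => a ⟨n + 1 + j.val, by omega⟩)))
          - lam • (g (fun j : Fin m => a ⟨j.val, by omega⟩) *
             hochDOCobReg k lam A d ⇑f (fun i : Fin (n+1) => a ⟨m + i.val, by omega⟩)) := rfl
      _ = ((-1:ℤ)^((n+1)*m)) • (lam • P) - lam • S := by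
          rw [eDf1, eDf4, ← egE, ← egE', hP, hS]
          rfl
  have hRHS2 : ∀ hc : n + (m + 1) = n + m + 1,
      doBracket k lam A ⇑f (hochDOCobReg k lam A d ⇑g) (fun i : Fin (n+(m+1)) => a (Fin.cast hc i))
        = ((-1:ℤ)^(n*(m+1))) • (lam • Q) - lam • R := by
    intro hc
    calc doBracket k lam A ⇑f (hochDOCobReg k lam A d ⇑g) (fun i : Fin (n+(m+1)) => a (Fin.cast hc i))
        = ((-1:ℤ)^(n*(m+1))) • (lam •
            (f (fun i : Fin n => a ⟨i.val, by omega⟩) *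
             hochDOCobReg k lam A d ⇑g (fun j : Fin (m+1) => a ⟨n + j.val, by omega⟩)))
          - lam • (hochDOCobReg k lam A d ⇑g (fun j : Fin (m+1) => a ⟨j.val, by omega⟩) *
             f (fun i : Fin n => a ⟨m + 1 + i.val, by omega⟩)) := rfl
      _ = ((-1:ℤ)^(n*(m+1))) • (lam • Q) - lam • R := by
          rw [eDg2, eDg3, ← efE, ← efE', hQ, hR]
          rfl
  rw [hRHS1 (by omega), hRHS2 (by omega)]
  have h1 : ((-1:ℤ))^((n+1)*m) = (-1)^m * (-1)^(n*m) := by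
    rw [← pow_add]
    congr 1
    ring
  have h2 : ((-1:ℤ))^n • (((-1:ℤ))^(n*(m+1)) • (lam • Q) - lam • R)
      = ((-1:ℤ))^(n*m) • (lam • Q) - ((-1:ℤ))^n • (lam • R) := by
    rw [smul_sub, smul_smul, ← pow_add, show n + n*(m+1) = 2*n + n*m from by ring, pow_add,
      pow_mul]
    norm_num
  rw [h1, h2]
  module
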